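/- (Theorem 1, semantic form.) The operator G : (Set (α × α))⁵ → (Set (α × α))⁵ defined by G(R)≺ = {(a,b) | ∃ c, (a,c) ∈ R⪯ ∧ (c,b) ∈ R◁}; G(R)⪯ = {(a,b) | a ∈ F {c | (c,b) ∈ R≺}}; G(R)⊀ = {(a,b) | b ∈ F ∅ ∨ (∃ c, (a,c) ∈ R⋠ ∧ (c,b) ∈ R◁) ∨ F ∅ = ∅}; G(R)⋠ = {(a,b) | a ∉ F {c | (c,b) ∉ R⊀}}; G(R)◁ = {(a,b) | a ∈ F {c | (c,a) ∈ R≺} ∧ b ∉ F {c | (c,a) ∉ R⊀} ∧ (b ∈ F {c | (c,a) ∈ R⪯} ∨ ∀ c, c ∈ F {c' | (c',a) ∉ R⋠} → c ∈ F {c' | (c',a) ∈ R≺})} is monotone with respect to componentwise inclusion of quintuples, and its least fixed point is exactly the intended quintuple I given by I≺ = {(a,b) | stage(a) < stage(b)}, I⪯ = {(a,b) | stage(a) ≤ stage(b) ∧ stage(a) ≤ f}, I⊀ = {(a,b) | stage(a) ≥ stage(b)}, I⋠ = {(a,b) | stage(a) > stage(b) ∨ stage(a) = f + 1}, I◁ =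 {(a,b) | stage(a) + 1 = stage(b)}. In particular, the stage-ordering relations are themselves definable as the (simultaneous) least fixed point of an operator in which the candidate relations occur only positively. -/

import Mathlib

/-
Write `s = stage F f` and `S l = F^[l] ∅`. Everything reduces to
`S l = {c | s c ≤ l ∧ s c ≤ f}`, hence `F {c | s c < s x} = S (s x)`, together with two facts
that use the minimality of `f`: every stage in `[1, f]` is attained, and `S (l + 1) ⊆ S l`
only when `f ≤ l`. Given these, `G F (I F f) ≤ I F f` is a direct computation. Conversely,
every prefixed point `R` of `G F` contains `I F f`: by induction on `s b`, the pairs `(a, b)`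
of the intended relations enter `R` in the order ◁, ≺, ⪯, ⊀, ⋠, each using the earlier ones
at the same `b` and the induction hypothesis at `a` or at an atom of stage `s b - 1`.
A prefixed point lying below every prefixed point of a monotone map is its least fixed point.
-/

/- The stage of an atom `a` under the staged fixed-point computation
(Algorithm 2): the least `l` with `a ∈ F^[l] ∅` if `a` belongs to the
fixed point `F^[f] ∅`, and `f + 1` otherwise. -/
open Classical in
noncomputable def stage {α : Type*} (F : Set α → Set α) (f : ℕ) (a : α) : ℕ :=
  if a ∈ F^[f] (∅ : Set α) then sInf {l : ℕ | a ∈ F^[l] (∅ : Set α)} else f + 1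

/- A quintuple of binary relations on `α`, in the order
(≺ strictly-before, ⪯ before, ⊀ not-strictly-before, ⋠ not-before,
◁ immediately-before). -/
abbrev Quint (α : Type*) :=
  Set (α × α) × Set (α × α) × Set (α × α) × Set (α × α) × Set (α × α)

namespace Quint

variable {α : Type*}

def lt (R : Quint α) : Set (α × α) := R.1
def le (R : Quint α) : Set (α × α) := R.2.1
def nlt (R : Quint α) : Set (α × α) := R.2.2.1
def nle (R : Quint α) : Set (α × α) := R.2.2.2.1
def imm (R : Quint α) : Set (α × α) := R.2.2.2.2

end Quint

/- The semantic stage-axiom operator (equations (1)–(5) of the paper). -/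
def G {α : Type*} (F : Set α → Set α) (R : Quint α) : Quint α :=
  ({p : α × α | ∃ c : α, (p.1, c) ∈ R.le ∧ (c, p.2) ∈ R.imm},
   {p : α × α | p.1 ∈ F {c : α | (c, p.2) ∈ R.lt}},
   {p : α × α | p.2 ∈ F ∅ ∨
      (∃ c : α, (p.1, c) ∈ R.nle ∧ (c, p.2) ∈ R.imm) ∨ F ∅ = ∅},
   {p : α × α | p.1 ∉ F {c : α | (c, p.2) ∉ R.nlt}},
   {p : α × α | p.1 ∈ F {c : α | (c, p.1) ∈ R.lt} ∧
      p.2 ∉ F {c : α | (c, p.1) ∉ R.nlt} ∧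
      (p.2 ∈ F {c : α | (c, p.1) ∈ R.le} ∨
        ∀ c : α, c ∈ F {c' : α | (c', p.1) ∉ R.nle} →
          c ∈ F {c' : α | (c', p.1) ∈ R.lt})})

/- The intended quintuple of stage-ordering relations. -/
noncomputable def I {α : Type*} (F : Set α → Set α) (f : ℕ) : Quint α :=
  ({p : α × α | stage F f p.1 < stage F f p.2},
   {p : α × α | stage F f p.1 ≤ stage F f p.2 ∧ stage F f p.1 ≤ f},
   {p : α × α | stage F f p.1 ≥ stage F f p.2},
   {p : α × α | stage F f p.1 > stage F f p.2 ∨ stage F f p.1 = f + 1},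
   {p : α × α | stage F f p.1 + 1 = stage F f p.2})


section StageOperator

variable {α : Type*} {F : Set α → Set α} {f : ℕ} {R : Quint α}

lemma iterate_empty_eq_of_le (hf : F^[f + 1] ∅ = F^[f] ∅) {j : ℕ} (hj : f ≤ j) :
    F^[j] (∅ : Set α) = F^[f] ∅ := by
  obtain ⟨k, rfl⟩ := Nat.exists_eq_add_of_le' hj
  have hfix : F (F^[f] ∅) = F^[f] ∅ := by rwa [← Function.iterate_succ_apply' F f ∅]
  rw [Function.iterate_add_apply, Function.iterate_fixed hfix]

lemma mem_iterate_empty_iff (hF : Monotone F) (hf : F^[f + 1] ∅ = F^[f] ∅) {a : α} {l : ℕ} :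
    a ∈ F^[l] ∅ ↔ stage F f a ≤ l ∧ stage F f a ≤ f := by
  have hS : Monotone fun j => F^[j] (∅ : Set α) :=
    hF.monotone_iterate_of_le_map (Set.empty_subset _)
  unfold stage
  split_ifs with ha
  · have hne : {l | a ∈ F^[l] (∅ : Set α)}.Nonempty := ⟨f, ha⟩
    exact ⟨fun hl => ⟨Nat.sInf_le hl, Nat.sInf_le ha⟩, fun h => hS h.1 (Nat.sInf_mem hne)⟩
  · refine ⟨fun hl => absurd ?_ ha, fun h => by omega⟩
    rw [← iterate_empty_eq_of_le hf (le_max_right l f)]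
    exact hS (le_max_left l f) hl

lemma one_le_stage (a : α) : 1 ≤ stage F f a := by
  unfold stage
  split_ifs with ha
  · refine Nat.one_le_iff_ne_zero.mpr fun h0 => ?_
    simpa [h0] using Nat.sInf_mem (⟨f, ha⟩ : {l | a ∈ F^[l] (∅ : Set α)}.Nonempty)
  · omega

lemma stage_le_succ (a : α) : stage F f a ≤ f + 1 := by
  unfold stage
  split_ifs with ha
  · exact (Nat.sInf_le ha).trans f.le_succ
  · rfl

lemma apply_setOf_stage_lt (hF : Monotone F) (hf : F^[f + 1] ∅ = F^[f] ∅) (x : α) :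
    F {c | stage F f c < stage F f x} = F^[stage F f x] ∅ := by
  obtain ⟨l, hl⟩ : ∃ l, stage F f x = l + 1 :=
    ⟨_, (Nat.succ_pred_eq_of_pos (one_le_stage x)).symm⟩
  have hlf : l ≤ f := by have := stage_le_succ (F := F) (f := f) x; omega
  have hset : {c | stage F f c < l + 1} = F^[l] ∅ := by
    ext c
    rw [mem_iterate_empty_iff hF hf]
    simp only [Set.mem_ofPred_eq]
    omega
  rw [hl, hset, Function.iterate_succ_apply']

lemma exists_stage_eq (hF : Monotone F) (hf : F^[f + 1] ∅ = F^[f] ∅)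
    (hfmin : ∀ j : ℕ, F^[j + 1] ∅ = F^[j] ∅ → f ≤ j) {k : ℕ} (hk : 1 ≤ k) (hkf : k ≤ f) :
    ∃ c : α, stage F f c = k := by
  obtain ⟨j, rfl⟩ := Nat.exists_eq_add_of_le' hk
  have hsub : F^[j] (∅ : Set α) ⊆ F^[j + 1] ∅ :=
    hF.monotone_iterate_of_le_map (Set.empty_subset _) j.le_succ
  have hne : F^[j] (∅ : Set α) ≠ F^[j + 1] ∅ := fun h => by have := hfmin j h.symm; omega
  obtain ⟨c, hc, hcj⟩ := Set.exists_of_ssubset (hsub.ssubset_of_ne hne)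
  rw [mem_iterate_empty_iff hF hf] at hc hcj
  exact ⟨c, by omega⟩

lemma apply_empty_eq_empty_iff (hf : F^[f + 1] ∅ = F^[f] ∅)
    (hfmin : ∀ j : ℕ, F^[j + 1] ∅ = F^[j] ∅ → f ≤ j) :
    F ∅ = ∅ ↔ f = 0 :=
  ⟨fun h => Nat.le_zero.mp (hfmin 0 h), by rintro rfl; exact hf⟩

lemma le_of_iterate_succ_subset (hF : Monotone F)
    (hfmin : ∀ j : ℕ, F^[j + 1] ∅ = F^[j] ∅ → f ≤ j) {l : ℕ}
    (h : F^[l + 1] (∅ : Set α) ⊆ F^[l] ∅) : f ≤ l :=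
  hfmin l (h.antisymm (hF.monotone_iterate_of_le_map (Set.empty_subset _) l.le_succ))

lemma iterate_stage_subset_apply (hF : Monotone F) (hf : F^[f + 1] ∅ = F^[f] ∅) {x : α}
    {T : Set α} (hT : ∀ c, stage F f c < stage F f x → c ∈ T) : F^[stage F f x] ∅ ⊆ F T :=
  apply_setOf_stage_lt hF hf x ▸ hF hT

lemma apply_subset_iterate_stage (hF : Monotone F) (hf : F^[f + 1] ∅ = F^[f] ∅) {x : α}
    {T : Set α} (hT : ∀ c, stage F f x ≤ stage F f c → c ∉ T) : F T ⊆ F^[stage F f x] ∅ :=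
  apply_setOf_stage_lt hF hf x ▸ hF fun c hc => not_le.mp fun h => hT c h hc

lemma monotone_G (hF : Monotone F) : Monotone (G F) := by
  rintro R T ⟨hlt, hle, hnlt, hnle, himm⟩
  have hlt' : ∀ b, F {c | (c, b) ∈ R.lt} ⊆ F {c | (c, b) ∈ T.lt} := fun _ => hF fun _ h => hlt h
  have hnlt' : ∀ b, F {c | (c, b) ∉ T.nlt} ⊆ F {c | (c, b) ∉ R.nlt} :=
    fun _ => hF fun _ h h' => h (hnlt h')
  refine ⟨?_, fun p hp => hlt' _ hp, ?_, fun p hp h => hp (hnlt' _ h), ?_⟩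
  · rintro p ⟨c, hac, hcb⟩
    exact ⟨c, hle hac, himm hcb⟩
  · rintro p (h | ⟨c, hac, hcb⟩ | h)
    exacts [Or.inl h, Or.inr (Or.inl ⟨c, hnle hac, himm hcb⟩), Or.inr (Or.inr h)]
  · rintro p ⟨hA, hB, hC | hC⟩
    · exact ⟨hlt' _ hA, fun h => hB (hnlt' _ h), Or.inl (hF (fun _ h => hle h) hC)⟩
    · refine ⟨hlt' _ hA, fun h => hB (hnlt' _ h), Or.inr fun c hc => hlt' _ (hC c ?_)⟩
      exact hF (fun _ (h : _ ∉ T.nle) h' => h (hnle h')) hc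

lemma G_intended_le (hF : Monotone F) (hf : F^[f + 1] ∅ = F^[f] ∅)
    (hfmin : ∀ j : ℕ, F^[j + 1] ∅ = F^[j] ∅ → f ≤ j) : G F (I F f) ≤ I F f := by
  have hmem : ∀ {a : α} {l}, a ∈ F^[l] ∅ ↔ stage F f a ≤ l ∧ stage F f a ≤ f :=
    mem_iterate_empty_iff hF hf
  have hlt : ∀ {a x : α}, a ∈ F {c | stage F f c < stage F f x} ↔
      stage F f a ≤ stage F f x ∧ stage F f a ≤ f := by
    intro a x
    rw [apply_setOf_stage_lt hF hf, hmem]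
  have hpos := one_le_stage (F := F) (f := f)
  have hsucc := stage_le_succ (F := F) (f := f)
  simp only [G, I, Quint.lt, Quint.le, Quint.nlt, Quint.nle, Quint.imm, Prod.mk_le_mk,
    Set.ofPred_subset_ofPred, Prod.forall, Set.mem_ofPred_eq, not_le, not_or, ge_iff_le, gt_iff_lt]
  refine ⟨fun a b => ?_, fun a b => ?_, fun a b => ?_, fun a b => ?_, fun a b => ?_⟩
  · rintro ⟨c, ⟨hac, -⟩, hcb⟩
    omega
  · exact hlt.mp
  · rintro (hb | ⟨c, hac, hcb⟩ | h0)
    · have := hmem.mp (Function.iterate_one F ▸ hb)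
      have := hpos a
      omega
    · have := hsucc b
      omega
    · have := (apply_empty_eq_empty_iff hf hfmin).mp h0
      have := hpos a
      have := hsucc b
      omega
  · intro ha
    by_contra! h
    exact ha (hlt.mpr (by have := hsucc a; omega))
  · have hset : ∀ l, {c | stage F f c ≤ l ∧ stage F f c ≤ f} = F^[l] ∅ :=
      fun l => Set.ext fun _ => hmem.symm
    rintro ⟨ha, hb, hb' | hstab⟩
    · rw [hset, ← Function.iterate_succ_apply' F _ ∅, hmem] at hb'
      have := hlt.mp ha
      have := mt hlt.mpr hb
      omega
    · have hsub : F^[stage F f a + 1] (∅ : Set α) ⊆ F^[stage F f a] ∅ := by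
        rw [Function.iterate_succ_apply', ← apply_setOf_stage_lt hF hf a]
        refine fun c hc => hstab c (hF (fun c' hc' => ?_) hc)
        have := hlt.mp hc'
        exact ⟨by omega, by omega⟩
      have := le_of_iterate_succ_subset hF hfmin hsub
      have := hlt.mp ha
      have := mt hlt.mpr hb
      have := hsucc b
      omega

structure IntendedLEAt (F : Set α → Set α) (f : ℕ) (R : Quint α) (b : α) : Prop where
  lt : ∀ a, stage F f a < stage F f b → (a, b) ∈ R.lt
  le : ∀ a, stage F f a ≤ stage F f b → stage F f a ≤ f → (a, b) ∈ R.le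
  nlt : ∀ a, stage F f b ≤ stage F f a → (a, b) ∈ R.nlt
  nle : ∀ a, stage F f b < stage F f a ∨ stage F f a = f + 1 → (a, b) ∈ R.nle
  imm : ∀ a, stage F f a + 1 = stage F f b → (a, b) ∈ R.imm

lemma intended_le_of_forall_intendedLEAt (h : ∀ b, IntendedLEAt F f R b) : I F f ≤ R :=
  ⟨fun p hp => (h p.2).lt p.1 hp, fun p hp => (h p.2).le p.1 hp.1 hp.2,
    fun p hp => (h p.2).nlt p.1 hp, fun p hp => (h p.2).nle p.1 hp, fun p hp => (h p.2).imm p.1 hp⟩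

lemma imm_mem_of_G_le (hF : Monotone F) (hf : F^[f + 1] ∅ = F^[f] ∅) (hR : G F R ≤ R)
    {a b : α} (ha : IntendedLEAt F f R a) (hab : stage F f a + 1 = stage F f b) :
    (a, b) ∈ R.imm := by
  have hmem : ∀ {c : α} {l}, c ∈ F^[l] ∅ ↔ stage F f c ≤ l ∧ stage F f c ≤ f :=
    mem_iterate_empty_iff hF hf
  have hsucc := stage_le_succ (F := F) (f := f)
  have hlt : F^[stage F f a] ∅ ⊆ F {c | (c, a) ∈ R.lt} := iterate_stage_subset_apply hF hf ha.lt
  have hnlt : F {c | (c, a) ∉ R.nlt} ⊆ F^[stage F f a] ∅ :=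
    apply_subset_iterate_stage hF hf fun c h hc => hc (ha.nlt c h)
  have hle : F^[stage F f a + 1] ∅ ⊆ F {c | (c, a) ∈ R.le} := by
    rw [Function.iterate_succ_apply']
    exact hF fun c hc => ha.le c (hmem.mp hc).1 (hmem.mp hc).2
  have hnle : F {c | (c, a) ∉ R.nle} ⊆ F^[stage F f a + 1] ∅ := by
    rw [Function.iterate_succ_apply']
    refine hF fun c (hc : (c, a) ∉ R.nle) => hmem.mpr ?_
    by_contra h
    exact hc (ha.nle c (by have := hsucc c; omega))
  have hsa : stage F f a ≤ f := by have := hsucc b; omega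
  have hb : b ∉ F {c | (c, a) ∉ R.nlt} := fun hb => by have := hmem.mp (hnlt hb); omega
  refine hR.2.2.2.2 ⟨hlt (hmem.mpr ⟨le_rfl, hsa⟩), hb, ?_⟩
  by_cases hbf : stage F f b ≤ f
  · exact Or.inl (hle (hmem.mpr ⟨hab.ge, hbf⟩))
  · -- `b` never enters, so `a` has the last stage `f` and `S (f + 1) = S f`.
    have haf : stage F f a = f := by omega
    refine Or.inr fun c hc => hlt ?_
    simpa only [haf, hf] using hnle hc

lemma intendedLEAt_of_G_le (hF : Monotone F) (hf : F^[f + 1] ∅ = F^[f] ∅)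
    (hfmin : ∀ j : ℕ, F^[j + 1] ∅ = F^[j] ∅ → f ≤ j) (hR : G F R ≤ R) (b : α)
    (ih : ∀ c, stage F f c < stage F f b → IntendedLEAt F f R c) : IntendedLEAt F f R b := by
  have hmem : ∀ {c : α} {l}, c ∈ F^[l] ∅ ↔ stage F f c ≤ l ∧ stage F f c ≤ f :=
    mem_iterate_empty_iff hF hf
  have hpos := one_le_stage (F := F) (f := f)
  have hsucc := stage_le_succ (F := F) (f := f)
  have himm : ∀ a, stage F f a + 1 = stage F f b → (a, b) ∈ R.imm :=
    fun a hab => imm_mem_of_G_le hF hf hR (ih a (by omega)) hab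
  have hpred : 2 ≤ stage F f b → ∃ c, stage F f c + 1 = stage F f b := fun hb => by
    obtain ⟨c, hc⟩ := exists_stage_eq (k := stage F f b - 1) hF hf hfmin (by omega)
      (by have := hsucc b; omega)
    exact ⟨c, by omega⟩
  have hlt : ∀ a, stage F f a < stage F f b → (a, b) ∈ R.lt := fun a hab => by
    obtain ⟨c, hcb⟩ := hpred (by have := hpos a; omega)
    exact hR.1 ⟨c, (ih c (by omega)).le a (by omega) (by have := hsucc b; omega), himm c hcb⟩
  have hnlt : ∀ a, stage F f b ≤ stage F f a → (a, b) ∈ R.nlt := fun a hab => hR.2.2.1 <| by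
    rcases Nat.eq_zero_or_pos f with hf0 | hf0
    · exact Or.inr (Or.inr ((apply_empty_eq_empty_iff hf hfmin).mpr hf0))
    rcases (show stage F f b = 1 ∨ 2 ≤ stage F f b by have := hpos b; omega) with hb | hb
    · exact Or.inl (hmem.mpr ⟨hb.le, by omega⟩ : b ∈ F^[1] ∅)
    · obtain ⟨c, hcb⟩ := hpred hb
      exact Or.inr (Or.inl ⟨c, (ih c (by omega)).nle a (Or.inl (by omega)), himm c hcb⟩)
  have hnlt' : F {c | (c, b) ∉ R.nlt} ⊆ F^[stage F f b] ∅ :=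
    apply_subset_iterate_stage hF hf fun c h hc => hc (hnlt c h)
  refine ⟨hlt, fun a hab haf => hR.2.1 ?_, hnlt,
    fun a hab => hR.2.2.2.1 fun (ha : a ∈ _) => ?_, himm⟩
  · exact iterate_stage_subset_apply hF hf hlt (hmem.mpr ⟨hab, haf⟩)
  · have := hmem.mp (hnlt' ha)
    omega

lemma intended_le_of_G_le (hF : Monotone F) (hf : F^[f + 1] ∅ = F^[f] ∅)
    (hfmin : ∀ j : ℕ, F^[j + 1] ∅ = F^[j] ∅ → f ≤ j) (hR : G F R ≤ R) : I F f ≤ R :=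
  intended_le_of_forall_intendedLEAt fun b => (measure (stage F f)).wf.induction b fun b ih =>
    intendedLEAt_of_G_le hF hf hfmin hR b ih

end StageOperator

theorem stage_axiom_operator_monotone_and_lfp_eq_intended_general
    {α : Type*} (F : Set α → Set α) (hF : Monotone F)
    (f : ℕ) (hf : F^[f + 1] ∅ = F^[f] ∅)
    (hfmin : ∀ j : ℕ, F^[j + 1] ∅ = F^[j] ∅ → f ≤ j) :
    Monotone (G F) ∧
    G F (I F f) = I F f ∧
    ∀ R : Quint α, G F R = R → I F f ≤ R := by
  have hmin : ∀ R, G F R ≤ R → I F f ≤ R := fun R => intended_le_of_G_le hF hf hfmin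
  have hpre : G F (I F f) ≤ I F f := G_intended_le hF hf hfmin
  exact ⟨monotone_G hF, hpre.antisymm (hmin _ (monotone_G hF hpre)), fun R hR => hmin R hR.le⟩

theorem stage_axiom_operator_monotone_and_lfp_eq_intended
    {α : Type*} [Fintype α] (F : Set α → Set α) (hF : Monotone F)
    (f : ℕ) (hf : F^[f + 1] ∅ = F^[f] ∅)
    (hfmin : ∀ j : ℕ, F^[j + 1] ∅ = F^[j] ∅ → f ≤ j) :
    Monotone (G F) ∧
    G F (I F f) = I F f ∧
    ∀ R : Quint α, G F R = R → I F f ≤ R :=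
  stage_axiom_operator_monotone_and_lfp_eq_intended_general F hF f hf hfmin
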